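/- arXiv:2411.01374 — 5 statements merged into one kernel-verified Lean document; each statement's English description precedes it below -/
import Mathlib

section
/- The spectral radius of the matrix F·V⁻¹, where F = [[0, k₁(1−ε_RT)λ/μ],[0,0]] and V = [[μ, 0],[−n_H(1−ε_P)μ, σ_H]], equals R_hiv := k₁ n_H (1−ε_RT)(1−ε_P) λ / (μ σ_H). -/
/-- The spectral radius of `F ⬝ V⁻¹` from the next-generation method for the
HIV submodel equals `R_hiv = k₁ n_H (1-ε_RT)(1-ε_P) λ / (μ σ_H)`:
`R_hiv` is an eigenvalue and every eigenvalue has absolute value `≤ R_hiv`. -/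
theorem spectral_radius_NGM_hiv
    (lam k1 mu nH sH eRT eP : ℝ)
    (hlam : 0 < lam) (hk1 : 0 < k1) (hmu : 0 < mu) (hnH : 0 < nH) (hsH : 0 < sH)
    (heRT : eRT ∈ Set.Ico (0:ℝ) 1) (heP : eP ∈ Set.Ico (0:ℝ) 1) :
    let F : Matrix (Fin 2) (Fin 2) ℝ := !![0, k1*(1-eRT)*lam/mu; 0, 0]
    let V : Matrix (Fin 2) (Fin 2) ℝ := !![mu, 0; -(nH*(1-eP)*mu), sH]
    let R : ℝ := k1*nH*(1-eRT)*(1-eP)*lam/(mu*sH)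
    R ∈ spectrum ℝ (F * V⁻¹) ∧ ∀ x ∈ spectrum ℝ (F * V⁻¹), |x| ≤ R := by
  intro F V R
  have h1 : (0:ℝ) < 1 - eRT := by linarith [heRT.2]
  have h2 : (0:ℝ) < 1 - eP := by linarith [heP.2]
  have hR : 0 < R := by positivity
  have hVinv : V⁻¹ = !![1/mu, 0; nH*(1-eP)/sH, 1/sH] := by
    apply Matrix.inv_eq_right_inv
    show V * _ = 1
    ext i j
    fin_cases i <;> fin_cases j <;>
      simp [V, Matrix.mul_apply, Fin.sum_univ_two] <;> field_simp <;> ring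
  have hM : F * V⁻¹ = !![R, k1*(1-eRT)*lam/(mu*sH); 0, 0] := by
    rw [hVinv]
    ext i j
    fin_cases i <;> fin_cases j <;>
      simp [F, R, Matrix.mul_apply, Fin.sum_univ_two] <;> field_simp <;> ring
  rw [hM]
  have hmem : ∀ x : ℝ, x ∈ spectrum ℝ (!![R, k1*(1-eRT)*lam/(mu*sH); 0, 0]) ↔
      x = R ∨ x = 0 := by
    intro x
    rw [spectrum.mem_iff, Matrix.isUnit_iff_isUnit_det, isUnit_iff_ne_zero, not_ne_iff,
      Matrix.det_fin_two]
    simp [Matrix.algebraMap_matrix_apply, sub_eq_zero]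
  constructor
  · exact (hmem R).mpr (Or.inl rfl)
  · intro x hx
    rcases (hmem x).mp hx with rfl | rfl
    · rw [abs_of_pos hR]
    · simpa using hR.le
end

section
/- All eigenvalues of the matrix J = [[−μ, 0, −k₂λ/μ],[0, −μ, k₂λ/μ],[0, n_Sμ, −σ_S]] have negative real part if and only if k₂ n_S λ/(μσ_S) < 1. -/
lemma sars_spec_mem (lam k2 mu nS sS : ℝ) (hmu : mu ≠ 0) (z : ℂ) :
    z ∈ spectrum ℂ ((!![-mu, 0, -(k2*lam/mu); 0, -mu, k2*lam/mu; 0, nS*mu, -sS] : Matrix (Fin 3) (Fin 3) ℝ).map (fun x : ℝ => (x : ℂ))) ↔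
    (z = -mu ∨ z^2 + (mu+sS)*z + (mu*sS - k2*nS*lam) = 0) := by
  have hmu' : (mu:ℂ) ≠ 0 := by exact_mod_cast hmu
  rw [spectrum.mem_iff, ← not_iff_not, not_not, Matrix.isUnit_iff_isUnit_det, isUnit_iff_ne_zero]
  rw [Matrix.det_fin_three]
  simp [Matrix.sub_apply, Matrix.map_apply, Matrix.algebraMap_matrix_apply, Matrix.one_apply,
    Matrix.vecHead, Matrix.vecTail]
  push_neg
  have hB : (z + (mu:ℂ)) * (z + mu) * (z + sS) - (z + mu) * (k2*lam/mu) * (nS*mu)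
      = (z + mu) * (z^2 + (mu+sS)*z + (mu*sS - k2*nS*lam)) := by
    field_simp; ring
  rw [hB, mul_ne_zero_iff]
  constructor
  · rintro ⟨h1, h2⟩; exact ⟨fun h => h1 (by rw [h]; ring), h2⟩
  · rintro ⟨h1, h2⟩; exact ⟨fun h => h1 (by linear_combination h), h2⟩

/-- All eigenvalues of the disease-free Jacobian of the SARS-CoV-2 submodel
have negative real part iff `R_sars = k₂ n_S λ/(μ σ_S) < 1`. -/
theorem sars_DFE_jacobian_stability
    (lam k2 mu nS sS : ℝ)
    (hlam : 0 < lam) (hk2 : 0 < k2) (hmu : 0 < mu) (hnS : 0 < nS) (hsS : 0 < sS) :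
    let J : Matrix (Fin 3) (Fin 3) ℝ :=
      !![-mu, 0, -(k2*lam/mu); 0, -mu, k2*lam/mu; 0, nS*mu, -sS]
    ((∀ z ∈ spectrum ℂ (J.map (fun x : ℝ => (x : ℂ))), z.re < 0) ↔
      k2*nS*lam/(mu*sS) < 1) := by
  intro J
  set b : ℝ := mu + sS with hb
  set c : ℝ := mu*sS - k2*nS*lam with hc
  have hbpos : 0 < b := by positivity
  have hR : (k2*nS*lam/(mu*sS) < 1) ↔ 0 < c := by
    rw [div_lt_one (by positivity)]
    constructor <;> intro h <;> simp only [hc] at * <;> linarith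
  rw [hR]
  constructor
  · -- all eigenvalues stable → 0 < c
    intro h
    by_contra hcle
    push_neg at hcle
    set x : ℝ := (-b + Real.sqrt (b^2 - 4*c)) / 2 with hx
    have hD : 0 ≤ b^2 - 4*c := by nlinarith
    have hs : Real.sqrt (b^2 - 4*c) ^ 2 = b^2 - 4*c := Real.sq_sqrt hD
    have hsb : b ≤ Real.sqrt (b^2 - 4*c) := by
      have : Real.sqrt (b^2) ≤ Real.sqrt (b^2 - 4*c) := Real.sqrt_le_sqrt (by nlinarith)
      rwa [Real.sqrt_sq hbpos.le] at this
    have hxnn : 0 ≤ x := by rw [hx]; linarith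
    have hmem : (x:ℂ) ∈ spectrum ℂ (J.map (fun x : ℝ => (x : ℂ))) := by
      rw [sars_spec_mem lam k2 mu nS sS hmu.ne' (x:ℂ)]
      right
      have : x^2 + b*x + c = 0 := by
        rw [hx]; field_simp; nlinarith [hs]
      simp only [hb, hc] at this
      exact_mod_cast this
    have := h (x:ℂ) hmem
    simp at this
    linarith
  · -- 0 < c → all eigenvalues stable
    intro hcpos z hz
    rw [sars_spec_mem lam k2 mu nS sS hmu.ne' z] at hz
    rcases hz with h1 | h2
    · rw [h1]; simpa using hmu
    · set X := z.re
      set Y := z.im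
      have hre : X^2 - Y^2 + b*X + c = 0 := by
        have := congrArg Complex.re h2
        simp [pow_two, Complex.add_re, Complex.mul_re, Complex.mul_im] at this
        simp only [hb, hc]
        linarith [this]
      have him : Y * (2*X + b) = 0 := by
        have := congrArg Complex.im h2
        simp [pow_two, Complex.add_im, Complex.mul_re, Complex.mul_im] at this
        simp only [hb]
        linarith [this]
      rcases mul_eq_zero.mp him with hY | hXb
      · have : X^2 + b*X + c = 0 := by rw [hY] at hre; linarith [hre]; 
        nlinarith [sq_nonneg X]
      · have : X = -b/2 := by linarith
        rw [this]; linarith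
end

section
/- Let a = k₂λn_S, σ = σ_S > 0, μ > 0 and suppose a > μσ (i.e., R_sars > 1). Then the discriminant term satisfies √(a² − 2aσ² + 4μσ³ + σ⁴) < a + σ², and hence the eigenvalue φ = (−(a + σ²) + √(a² − 2aσ² + 4μσ³ + σ⁴))/(2σ) is strictly negative. -/
/-- Key eigenvalue estimate for the endemic equilibrium of the SARS-CoV-2
submodel: if `a > μσ` then `√(a² - 2aσ² + 4μσ³ + σ⁴) < a + σ²`, hence the
eigenvalue `φ = (-(a+σ²) + √(a² - 2aσ² + 4μσ³ + σ⁴))/(2σ)` is negative. -/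
theorem endemic_eigenvalue_negative
    (a s mu : ℝ) (ha : 0 < a) (hs : 0 < s) (hmu : 0 < mu) (hR : mu * s < a) :
    Real.sqrt (a^2 - 2*a*s^2 + 4*mu*s^3 + s^4) < a + s^2 ∧
    (-(a + s^2) + Real.sqrt (a^2 - 2*a*s^2 + 4*mu*s^3 + s^4))/(2*s) < 0 := by
  have hpos : 0 < a + s^2 := by positivity
  have h1 : Real.sqrt (a^2 - 2*a*s^2 + 4*mu*s^3 + s^4) < a + s^2 := by
    rw [show (a + s^2 : ℝ) = Real.sqrt ((a + s^2)^2) by rw [Real.sqrt_sq hpos.le]]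
    apply Real.sqrt_lt_sqrt
    · nlinarith [sq_nonneg (a - s^2), sq_nonneg s, mul_pos hmu hs]
    · nlinarith [mul_pos (mul_pos hs hs) (sub_pos.2 hR)]
  refine ⟨h1, div_neg_of_neg_of_pos (by linarith) (by linarith)⟩
end

section
/- The 6×6 Jacobian of the full coinfection model at the disease-free equilibrium (λ/μ, 0, 0, 0, 0, 0) has as eigenvalues exactly the three eigenvalues of the HIV-submodel disease-free Jacobian together with the three eigenvalues of the SARS-CoV-2-submodel disease-free Jacobian (with −μ counted with multiplicity). -/
set_option maxHeartbeats 1600000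
set_option maxRecDepth 8000

open Polynomial

lemma det6_aux {R : Type*} [CommRing R] (a b c d e f g h i j k l : R) :
    (!![a,0,0,b,c,0; 0,d,0,e,0,0; 0,0,f,0,g,0; 0,h,0,i,0,0; 0,0,j,0,k,0;
        0,0,0,0,0,l] : Matrix (Fin 6) (Fin 6) R).det
    = a * l * (d*i - e*h) * (f*k - g*j) := by
  simp [Matrix.det_succ_row_zero, Fin.sum_univ_succ, Fin.succAbove]
  ring

lemma det3_aux {R : Type*} [CommRing R] (a b c d e f : R) :
    (!![a,0,b; 0,c,d; 0,e,f] : Matrix (Fin 3) (Fin 3) R).det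
    = a * (c*f - d*e) := by
  simp [Matrix.det_fin_three, Matrix.vecHead, Matrix.vecTail]
  ring

/-- The eigenvalues of the 6×6 disease-free Jacobian of the full coinfection
model are exactly those of the HIV-submodel and SARS-CoV-2-submodel
disease-free Jacobians, counted with multiplicity: the characteristic
polynomials multiply. -/
theorem full_DFE_jacobian_charpoly
    (lam k1 k2 mu nH nS sH sS eRT eP : ℝ)
    (hlam : 0 < lam) (hk1 : 0 < k1) (hk2 : 0 < k2) (hmu : 0 < mu)
    (hnH : 0 < nH) (hnS : 0 < nS) (hsH : 0 < sH) (hsS : 0 < sS)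
    (heRT : eRT ∈ Set.Icc (0:ℝ) 1) (heP : eP ∈ Set.Icc (0:ℝ) 1) :
    let J6 : Matrix (Fin 6) (Fin 6) ℝ :=
      !![-mu, 0, 0, -(k1*(1-eRT)*lam/mu), -(k2*lam/mu), 0;
         0, -mu, 0, k1*(1-eRT)*lam/mu, 0, 0;
         0, 0, -mu, 0, k2*lam/mu, 0;
         0, nH*(1-eP)*mu, 0, -sH, 0, 0;
         0, 0, nS*mu, 0, -sS, 0;
         0, 0, 0, 0, 0, -mu]
    let Jh : Matrix (Fin 3) (Fin 3) ℝ :=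
      !![-mu, 0, -(k1*(1-eRT)*lam/mu);
         0, -mu, k1*(1-eRT)*lam/mu;
         0, nH*(1-eP)*mu, -sH]
    let Js : Matrix (Fin 3) (Fin 3) ℝ :=
      !![-mu, 0, -(k2*lam/mu);
         0, -mu, k2*lam/mu;
         0, nS*mu, -sS]
    J6.charpoly = Jh.charpoly * Js.charpoly := by
  intro J6 Js Jsn
  have hch6 : J6.charmatrix =
      !![X + C mu, 0, 0, C (k1*(1-eRT)*lam/mu), C (k2*lam/mu), 0;
         0, X + C mu, 0, -C (k1*(1-eRT)*lam/mu), 0, 0;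
         0, 0, X + C mu, 0, -C (k2*lam/mu), 0;
         0, -C (nH*(1-eP)*mu), 0, X + C sH, 0, 0;
         0, 0, -C (nS*mu), 0, X + C sS, 0;
         0, 0, 0, 0, 0, X + C mu] := by
    ext i j : 2
    simp only [J6, Js, Jsn]
    rw [Matrix.charmatrix_apply]
    fin_cases i <;> fin_cases j <;>
      norm_num [Matrix.diagonal] <;> rfl
  have hchh : Js.charmatrix =
      !![X + C mu, 0, C (k1*(1-eRT)*lam/mu);
         0, X + C mu, -C (k1*(1-eRT)*lam/mu);
         0, -C (nH*(1-eP)*mu), X + C sH] := by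
    ext i j : 2
    simp only [J6, Js, Jsn]
    rw [Matrix.charmatrix_apply]
    fin_cases i <;> fin_cases j <;>
      norm_num [Matrix.diagonal] <;> rfl
  have hchs : Jsn.charmatrix =
      !![X + C mu, 0, C (k2*lam/mu);
         0, X + C mu, -C (k2*lam/mu);
         0, -C (nS*mu), X + C sS] := by
    ext i j : 2
    simp only [J6, Js, Jsn]
    rw [Matrix.charmatrix_apply]
    fin_cases i <;> fin_cases j <;>
      norm_num [Matrix.diagonal] <;> rfl
  rw [Matrix.charpoly, Matrix.charpoly, Matrix.charpoly, hch6, hchh, hchs,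
    det6_aux, det3_aux, det3_aux]
  ring
end

section
/- All eigenvalues of the 6×6 disease-free Jacobian of the full coinfection model have negative real part if and only if max(R_hiv, R_sars) < 1, where R_hiv = k₁n_H(1−ε_RT)(1−ε_P)λ/(μσ_H) and R_sars = k₂n_Sλ/(μσ_S). -/
lemma quad_stable (p q : ℝ) (hp : 0 < p) :
    (∀ z : ℂ, z^2 + p*z + q = 0 → z.re < 0) ↔ 0 < q := by
  constructor
  · intro h
    by_contra hq
    push_neg at hq
    have hd : 0 ≤ p^2 - 4*q := by nlinarith
    set s := Real.sqrt (p^2 - 4*q) with hsdef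
    have hs2 : s^2 = p^2 - 4*q := Real.sq_sqrt hd
    have hsp : p ≤ s := by
      have h1 : p = Real.sqrt (p^2) := by
        rw [Real.sqrt_sq hp.le]
      rw [h1]
      exact Real.sqrt_le_sqrt (by nlinarith)
    have hroot : ((((s - p)/2 : ℝ)) : ℂ)^2 + p*(((s - p)/2 : ℝ) : ℂ) + q = 0 := by
      have hr : ((s - p)/2)^2 + p*((s - p)/2) + q = 0 := by nlinarith
      have h2 := congrArg (fun x : ℝ => (x:ℂ)) hr
      push_cast at h2
      push_cast
      linear_combination h2
    have := h _ hroot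
    rw [Complex.ofReal_re] at this
    nlinarith
  · intro hq z hz
    have hre := congrArg Complex.re hz
    have him := congrArg Complex.im hz
    simp only [pow_two, Complex.add_re, Complex.add_im, Complex.mul_re, Complex.mul_im,
      Complex.ofReal_re, Complex.ofReal_im, Complex.zero_re, Complex.zero_im] at hre him
    have him' : z.im * (2*z.re + p) = 0 := by nlinarith
    rcases mul_eq_zero.1 him' with h1 | h2
    · rw [h1] at hre
      nlinarith [sq_nonneg z.re, sq_nonneg (z.re + p)]
    · linarith

lemma quad_stable' (m s r : ℝ) (hm : 0 < m) (hs : 0 < s) :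
    (∀ z : ℂ, (z+(m:ℂ))*(z+(s:ℂ)) - (r:ℂ) = 0 → z.re < 0) ↔ r < m*s := by
  have key : ∀ z : ℂ, (z+(m:ℂ))*(z+(s:ℂ)) - (r:ℂ) = z^2 + ((m+s:ℝ):ℂ)*z + ((m*s-r:ℝ):ℂ) := by
    intro z; push_cast; ring
  rw [show (r < m*s) ↔ (0 < m*s - r) from by constructor <;> intro <;> linarith,
    ← quad_stable (m+s) (m*s-r) (by linarith)]
  exact forall_congr' fun z => by rw [key z]

set_option maxHeartbeats 2000000 in
set_option maxRecDepth 20000 in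
lemma detJ6 (a b c d m sh ss : ℝ) (z : ℂ) :
    (z • (1:Matrix (Fin 6) (Fin 6) ℂ) -
      (!![-m, 0, 0, -a, -c, 0;
         0, -m, 0, a, 0, 0;
         0, 0, -m, 0, c, 0;
         0, b, 0, -sh, 0, 0;
         0, 0, d, 0, -ss, 0;
         0, 0, 0, 0, 0, -m] : Matrix (Fin 6) (Fin 6) ℝ).map (fun x : ℝ => (x : ℂ))).det
    = (z+(m:ℂ))^2 * ((z+(m:ℂ))*(z+(sh:ℂ)) - (a:ℂ)*(b:ℂ))
      * ((z+(m:ℂ))*(z+(ss:ℂ)) - (c:ℂ)*(d:ℂ)) := by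
  simp only [Matrix.det_succ_row_zero, Fin.sum_univ_succ, Matrix.det_unique,
    Fin.default_eq_zero, Finset.univ_unique, Finset.sum_singleton,
    Matrix.submatrix_apply, Matrix.submatrix_submatrix, Function.comp_apply,
    Fin.zero_succAbove, Fin.succ_succAbove_zero, Fin.succ_succAbove_succ,
    Fin.val_succ, Fin.val_zero, Matrix.cons_val_zero, Matrix.cons_val_succ,
    Matrix.of_apply, Matrix.cons_val', Matrix.head_cons, Matrix.head_fin_const,
    Matrix.empty_val', pow_succ, pow_zero, Matrix.sub_apply, Matrix.smul_apply,
    Matrix.one_apply, smul_eq_mul, Fin.succ_ne_zero, (Fin.succ_ne_zero _).symm,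
    Fin.succ_inj, if_true, if_false, mul_one, mul_zero, ne_eq, Matrix.cons_val_fin_one,
    Matrix.map_apply, Complex.ofReal_neg, Complex.ofReal_zero]
  push_cast
  ring

lemma spectrum_iff_det (M : Matrix (Fin 6) (Fin 6) ℂ) (z : ℂ) :
    z ∈ spectrum ℂ M ↔ (z • (1:Matrix (Fin 6) (Fin 6) ℂ) - M).det = 0 := by
  rw [spectrum.mem_iff, Matrix.isUnit_iff_isUnit_det, isUnit_iff_ne_zero, not_ne_iff,
    Algebra.algebraMap_eq_smul_one]

/-- All eigenvalues of the 6×6 disease-free Jacobian of the full coinfection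
model have negative real part iff `max (R_hiv) (R_sars) < 1`. -/
theorem full_DFE_jacobian_stability
    (lam k1 k2 mu nH nS sH sS eRT eP : ℝ)
    (hlam : 0 < lam) (hk1 : 0 < k1) (hk2 : 0 < k2) (hmu : 0 < mu)
    (hnH : 0 < nH) (hnS : 0 < nS) (hsH : 0 < sH) (hsS : 0 < sS)
    (heRT : eRT ∈ Set.Ico (0:ℝ) 1) (heP : eP ∈ Set.Ico (0:ℝ) 1) :
    let J6 : Matrix (Fin 6) (Fin 6) ℝ :=
      !![-mu, 0, 0, -(k1*(1-eRT)*lam/mu), -(k2*lam/mu), 0;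
         0, -mu, 0, k1*(1-eRT)*lam/mu, 0, 0;
         0, 0, -mu, 0, k2*lam/mu, 0;
         0, nH*(1-eP)*mu, 0, -sH, 0, 0;
         0, 0, nS*mu, 0, -sS, 0;
         0, 0, 0, 0, 0, -mu]
    let Rhiv : ℝ := k1*nH*(1-eRT)*(1-eP)*lam/(mu*sH)
    let Rsars : ℝ := k2*nS*lam/(mu*sS)
    ((∀ z ∈ spectrum ℂ (J6.map (fun x : ℝ => (x : ℂ))), z.re < 0) ↔
      max Rhiv Rsars < 1) := by
  intro J6 Rhiv Rsars
  obtain ⟨heRT0, heRT1⟩ := heRT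
  obtain ⟨heP0, heP1⟩ := heP
  set a : ℝ := k1*(1-eRT)*lam/mu with ha
  set b : ℝ := nH*(1-eP)*mu with hb
  set c : ℝ := k2*lam/mu with hc
  set d : ℝ := nS*mu with hd
  have hmu' : mu ≠ 0 := hmu.ne'
  have hRhiv : Rhiv = (a*b)/(mu*sH) := by
    show k1*nH*(1-eRT)*(1-eP)*lam/(mu*sH) = _
    rw [ha, hb]; field_simp
  have hRsars : Rsars = (c*d)/(mu*sS) := by
    show k2*nS*lam/(mu*sS) = _
    rw [hc, hd]; field_simp
  have hRhiv' : Rhiv < 1 ↔ a*b < mu*sH := by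
    rw [hRhiv, div_lt_one (by positivity)]
  have hRsars' : Rsars < 1 ↔ c*d < mu*sS := by
    rw [hRsars, div_lt_one (by positivity)]
  have hspec : ∀ z : ℂ, z ∈ spectrum ℂ (J6.map (fun x : ℝ => (x : ℂ))) ↔
      ((z+(mu:ℂ))^2 * ((z+(mu:ℂ))*(z+(sH:ℂ)) - (a:ℂ)*(b:ℂ))
        * ((z+(mu:ℂ))*(z+(sS:ℂ)) - (c:ℂ)*(d:ℂ)) = 0) := by
    intro z
    rw [spectrum_iff_det, show J6 = !![-mu, 0, 0, -a, -c, 0;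
         0, -mu, 0, a, 0, 0;
         0, 0, -mu, 0, c, 0;
         0, b, 0, -sH, 0, 0;
         0, 0, d, 0, -sS, 0;
         0, 0, 0, 0, 0, -mu] from rfl, detJ6]
  rw [max_lt_iff, hRhiv', hRsars']
  have hq1 := quad_stable' mu sH (a*b) hmu hsH
  have hq2 := quad_stable' mu sS (c*d) hmu hsS
  push_cast at hq1 hq2
  constructor
  · intro h
    constructor
    · refine hq1.1 fun z hz => h z ?_
      rw [hspec z, hz]; ring
    · refine hq2.1 fun z hz => h z ?_
      rw [hspec z, hz]; ring
  · rintro ⟨h1, h2⟩ z hz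
    rw [hspec z] at hz
    rcases mul_eq_zero.1 hz with hz' | hz'
    · rcases mul_eq_zero.1 hz' with hz'' | hz''
      · have hz3 : z = -(mu:ℂ) := by
          have h4 := pow_eq_zero_iff (n := 2) (by norm_num) |>.1 hz''
          linear_combination h4
        rw [hz3]
        simpa using hmu
      · exact hq1.2 h1 z hz''
    · exact hq2.2 h2 z hz'
end
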